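/- Under the conditions of the optimal-blocklength theorem (δ ∈ (0,1/2), B, ρ_A, ρ_E > 0, K_E ≥ 1), at N = N* (the unique zero of Ξ), the partial derivative of T with respect to B is strictly positive: ∂T/∂B |_{N=N*} = (1/N)·(ρ_E ϖ₂)^{−K_E}·e^{−(ϖ₁−1)/ρ_A}·(ϖ₁/ρ_A)·(1 + K_E/ϖ₂)·Q^{−1}(δ)/(2√N) |_{N=N*} > 0. Hence the optimal secrecy throughput T(N*(B), B) is strictly increasing in B. -/

import Mathlib

open Real Set

/-- The Gaussian Q-function. -/
noncomputable def gaussQ (z : ℝ) : ℝ :=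
  ∫ t in Set.Ioi z, (Real.sqrt (2 * Real.pi))⁻¹ * Real.exp (-t ^ 2 / 2)

open MeasureTheory

lemma gauss_integrable : Integrable (fun t : ℝ => (Real.sqrt (2 * Real.pi))⁻¹ * Real.exp (-t ^ 2 / 2)) := by
  have h := (integrable_exp_neg_mul_sq (by norm_num : (0:ℝ) < 1/2)).const_mul (Real.sqrt (2 * Real.pi))⁻¹
  convert h using 2 with t
  ring_nf

lemma gaussQ_zero : gaussQ 0 = 1 / 2 := by
  unfold gaussQ
  have : ∀ t : ℝ, (Real.sqrt (2 * Real.pi))⁻¹ * Real.exp (-t ^ 2 / 2)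
      = (Real.sqrt (2 * Real.pi))⁻¹ * Real.exp (-(1/2) * t ^ 2) := by
    intro t; ring_nf
  simp only [this]
  rw [MeasureTheory.integral_const_mul, integral_gaussian_Ioi]
  have h2 : Real.sqrt (Real.pi / (1/2)) = Real.sqrt (2 * Real.pi) := by norm_num; ring_nf
  rw [h2, inv_mul_eq_div, div_div, eq_div_iff (by positivity)]
  field_simp

lemma gaussQ_anti {z w : ℝ} (h : z ≤ w) : gaussQ w ≤ gaussQ z := by
  unfold gaussQ
  apply MeasureTheory.setIntegral_mono_set gauss_integrable.integrableOn
  · filter_upwards with t using by positivity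
  · exact Filter.Eventually.of_forall (fun t ht => lt_of_le_of_lt h ht)

lemma qδ_pos {δ qδ : ℝ} (hδ : δ ∈ Set.Ioo (0 : ℝ) (1 / 2)) (hq : gaussQ qδ = δ) : 0 < qδ := by
  by_contra h
  push_neg at h
  have := gaussQ_anti h
  rw [gaussQ_zero, hq] at this
  linarith [hδ.2]

lemma deriv_core (ρA ρE N c L : ℝ) (K : ℕ) (hρA : 0 < ρA) (hρE : 0 < ρE)
    (hK : 1 ≤ K) (hN : N ≠ 0) (B : ℝ) :
    HasDerivAt (fun b : ℝ => (b / N) * ((ρE * (Real.exp (c + (b / N) * L) / ρA + 1 / ρE)) ^ K)⁻¹ *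
      Real.exp (-((Real.exp (c + (b / N) * L) - 1) / ρA)))
    ((1 / N) * ((ρE * (Real.exp (c + (B / N) * L) / ρA + 1 / ρE)) ^ K)⁻¹ *
      Real.exp (-((Real.exp (c + (B / N) * L) - 1) / ρA)) *
      (1 - (B / N * L) * (Real.exp (c + (B / N) * L) / ρA) *
        (1 + (K : ℝ) / (Real.exp (c + (B / N) * L) / ρA + 1 / ρE)))) B := by
  obtain ⟨m, hm⟩ := Nat.exists_eq_add_of_le hK
  subst hm
  have hEpos : (0:ℝ) < Real.exp (c + (B / N) * L) := Real.exp_pos _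
  have h1 : HasDerivAt (fun b : ℝ => c + (b / N) * L) (L / N) B := by
    have := (((hasDerivAt_id B).div_const N).mul_const L).const_add c
    exact this.congr_deriv (by ring)
  have hexp : HasDerivAt (fun b : ℝ => Real.exp (c + (b / N) * L))
      (Real.exp (c + (B / N) * L) * (L / N)) B := h1.exp
  have hw2 : HasDerivAt (fun b : ℝ => ρE * (Real.exp (c + (b / N) * L) / ρA + 1 / ρE))
      (ρE * (Real.exp (c + (B / N) * L) * (L / N) / ρA)) B :=
    ((hexp.div_const ρA).add_const (1 / ρE)).const_mul ρE
  have hpow := hw2.pow (1 + m)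
  have hP0 : (ρE * (Real.exp (c + (B / N) * L) / ρA + 1 / ρE)) ^ (1 + m) ≠ 0 := by positivity
  have hinv := hpow.inv hP0
  have hb : HasDerivAt (fun b : ℝ => b / N) (1 / N) B := (hasDerivAt_id B).div_const N
  have hexp2 : HasDerivAt (fun b : ℝ => Real.exp (-((Real.exp (c + (b / N) * L) - 1) / ρA)))
      (Real.exp (-((Real.exp (c + (B / N) * L) - 1) / ρA)) *
        (-(Real.exp (c + (B / N) * L) * (L / N) / ρA))) B :=
    (((hexp.sub_const 1).div_const ρA).neg).exp
  have total := (hb.mul hinv).mul hexp2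
  refine total.congr_deriv ?_
  symm
  simp only [Pi.mul_apply, Pi.pow_apply, Pi.inv_apply]
  simp only [Nat.add_sub_cancel_left, pow_add, pow_one]
  push_cast
  generalize Real.exp (-((Real.exp (c + B / N * L) - 1) / ρA)) = E3
  generalize hEv : Real.exp (c + B / N * L) = Ev at hEpos ⊢
  have hwpos : (0:ℝ) < Ev / ρA + 1 / ρE := by positivity
  generalize hwg : Ev / ρA + 1 / ρE = w at hwpos ⊢
  have hPpos : (0:ℝ) < (ρE * w) ^ m := by positivity
  generalize hPg : (ρE * w) ^ m = P at hPpos ⊢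
  field_simp
  ring

/-- at the optimal blocklength `N* = Nstar B` (the zero of `Ξ`),
the partial derivative of `T` with respect to `B` equals the displayed strictly
positive quantity; hence the optimal throughput `B ↦ T(Nstar B, B)` is strictly
increasing in `B`. -/
theorem optimal_throughput_increasing_in_B (ρA ρE δ qδ : ℝ) (K_E : ℕ)
    (hρA : 0 < ρA) (hρE : 0 < ρE) (hK : 1 ≤ K_E)
    (hδ : δ ∈ Set.Ioo (0 : ℝ) (1 / 2)) (hq : gaussQ qδ = δ)
    (ϖ₁ ϖ₂ T Ξ : ℝ → ℝ → ℝ)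
    (hϖ₁ : ϖ₁ = fun b N => Real.exp (qδ / Real.sqrt N + (b / N) * Real.log 2))
    (hϖ₂ : ϖ₂ = fun b N => ϖ₁ b N / ρA + 1 / ρE)
    (hT : T = fun b N => (b / N) * ((ρE * ϖ₂ b N) ^ K_E)⁻¹ *
      Real.exp (-((ϖ₁ b N - 1) / ρA)))
    (hΞ : Ξ = fun b N => (ϖ₁ b N / ρA) *
      (qδ / (2 * Real.sqrt N) + (b / N) * Real.log 2) *
      (1 + (K_E : ℝ) / ϖ₂ b N) - 1)
    (Nstar : ℝ → ℝ)
    (hNstar : ∀ b : ℝ, 0 < b → 0 < Nstar b ∧ Ξ b (Nstar b) = 0 ∧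
      ∀ n : ℝ, 0 < n → T b n ≤ T b (Nstar b)) :
    (∀ B : ℝ, 0 < B →
      HasDerivAt (fun b : ℝ => T b (Nstar B))
        ((1 / Nstar B) * ((ρE * ϖ₂ B (Nstar B)) ^ K_E)⁻¹ *
          Real.exp (-((ϖ₁ B (Nstar B) - 1) / ρA)) *
          ((ϖ₁ B (Nstar B) / ρA) * (1 + (K_E : ℝ) / ϖ₂ B (Nstar B)) *
            (qδ / (2 * Real.sqrt (Nstar B))))) B ∧
      0 < (1 / Nstar B) * ((ρE * ϖ₂ B (Nstar B)) ^ K_E)⁻¹ *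
          Real.exp (-((ϖ₁ B (Nstar B) - 1) / ρA)) *
          ((ϖ₁ B (Nstar B) / ρA) * (1 + (K_E : ℝ) / ϖ₂ B (Nstar B)) *
            (qδ / (2 * Real.sqrt (Nstar B))))) ∧
    StrictMonoOn (fun b : ℝ => T b (Nstar b)) (Set.Ioi 0) := by
  have hq0 : 0 < qδ := qδ_pos hδ hq
  subst hϖ₁ hϖ₂ hT hΞ
  simp only at hNstar ⊢
  constructor
  · intro B hB
    obtain ⟨hNpos, hXi, -⟩ := hNstar B hB
    have hsN : 0 < Real.sqrt (Nstar B) := Real.sqrt_pos.mpr hNpos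
    have hcore := deriv_core ρA ρE (Nstar B) (qδ / Real.sqrt (Nstar B)) (Real.log 2) K_E
      hρA hρE hK hNpos.ne' B
    constructor
    · convert hcore using 1
      linear_combination ((1 / Nstar B) *
        ((ρE * (Real.exp (qδ / Real.sqrt (Nstar B) + B / Nstar B * Real.log 2) / ρA + 1 / ρE)) ^ K_E)⁻¹ *
        Real.exp (-((Real.exp (qδ / Real.sqrt (Nstar B) + B / Nstar B * Real.log 2) - 1) / ρA))) * hXi
    · have hK0 : K_E ≠ 0 := by omega
      positivity
  · intro b1 hb1 b2 hb2 h12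
    simp only [Set.mem_Ioi] at hb1 hb2
    beta_reduce
    obtain ⟨hN1, -, hopt1⟩ := hNstar b1 hb1
    obtain ⟨hN2, -, hopt2⟩ := hNstar b2 hb2
    set n2 : ℝ := Nstar b1 * b2 / b1 with hn2def
    have hn2 : 0 < n2 := by positivity
    have hratio : b2 / n2 = b1 / Nstar b1 := by
      rw [hn2def]; field_simp
    have hn2gt : Nstar b1 < n2 := by
      rw [hn2def, lt_div_iff₀ hb1]
      nlinarith
    have hsqrt : Real.sqrt (Nstar b1) < Real.sqrt n2 := Real.sqrt_lt_sqrt hN1.le hn2gt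
    have hs1 : 0 < Real.sqrt (Nstar b1) := Real.sqrt_pos.mpr hN1
    have hw1lt : Real.exp (qδ / Real.sqrt n2 + b2 / n2 * Real.log 2) <
        Real.exp (qδ / Real.sqrt (Nstar b1) + b1 / Nstar b1 * Real.log 2) := by
      rw [Real.exp_lt_exp, hratio]
      have : qδ / Real.sqrt n2 < qδ / Real.sqrt (Nstar b1) :=
        div_lt_div_of_pos_left hq0 hs1 hsqrt
      linarith
    set E2 := Real.exp (qδ / Real.sqrt n2 + b2 / n2 * Real.log 2) with hE2
    set E1 := Real.exp (qδ / Real.sqrt (Nstar b1) + b1 / Nstar b1 * Real.log 2) with hE1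
    have hE2pos : 0 < E2 := Real.exp_pos _
    have hE1pos : 0 < E1 := Real.exp_pos _
    have hKne : K_E ≠ 0 := by omega
    have hwlt : E2 / ρA + 1 / ρE < E1 / ρA + 1 / ρE := by gcongr
    have hAlt : ((ρE * (E1 / ρA + 1 / ρE)) ^ K_E)⁻¹ < ((ρE * (E2 / ρA + 1 / ρE)) ^ K_E)⁻¹ := by
      apply inv_strictAnti₀ (by positivity)
      apply pow_lt_pow_left₀ _ (by positivity) hKne
      exact (mul_lt_mul_iff_right₀ hρE).mpr hwlt
    have hClt : Real.exp (-((E1 - 1) / ρA)) < Real.exp (-((E2 - 1) / ρA)) := by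
      rw [Real.exp_lt_exp]
      have : (E2 - 1) / ρA < (E1 - 1) / ρA := by gcongr
      linarith
    have hbN : 0 < b1 / Nstar b1 := by positivity
    have step1 : b1 / Nstar b1 * ((ρE * (E1 / ρA + 1 / ρE)) ^ K_E)⁻¹ *
          Real.exp (-((E1 - 1) / ρA))
        < b2 / n2 * ((ρE * (E2 / ρA + 1 / ρE)) ^ K_E)⁻¹ *
          Real.exp (-((E2 - 1) / ρA)) := by
      rw [hratio]
      calc b1 / Nstar b1 * ((ρE * (E1 / ρA + 1 / ρE)) ^ K_E)⁻¹ * Real.exp (-((E1 - 1) / ρA))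
          < b1 / Nstar b1 * ((ρE * (E2 / ρA + 1 / ρE)) ^ K_E)⁻¹ * Real.exp (-((E1 - 1) / ρA)) := by
            apply mul_lt_mul_of_pos_right _ (Real.exp_pos _)
            exact (mul_lt_mul_iff_right₀ hbN).mpr hAlt
        _ < b1 / Nstar b1 * ((ρE * (E2 / ρA + 1 / ρE)) ^ K_E)⁻¹ * Real.exp (-((E2 - 1) / ρA)) := by
            apply mul_lt_mul_of_pos_left hClt (by positivity)
    exact lt_of_lt_of_le step1 (hopt2 n2 hn2)
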